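/- Term Reducibility (call-by-value): for every closed λ-term M and every natural number n, the following are equivalent: (1) M reduces under weak call-by-value reduction in exactly n steps to a term N in →v-normal form; (2) ⟨M⟩ rewrites in exactly n steps in Φ to a Φ-term t in Φ-normal form with ⟦t⟧ = N. -/

import Mathlib

/-- Untyped λ-terms over variables drawn from ℕ (a denumerable totally ordered set). -/
inductive Lam : Type
  | var : ℕ → Lam
  | lam : ℕ → Lam → Lam
  | app : Lam → Lam → Lam
deriving DecidableEq, Repr

namespace Lam

/-- Capture-permitting substitution M{N/x} (adequate for weak reduction of closed terms). -/
def subst : Lam → ℕ → Lam → Lam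
  | var y, x, N => if y = x then N else var y
  | lam y M, x, N => if y = x then lam y M else lam y (subst M x N)
  | app M₁ M₂, x, N => app (subst M₁ x N) (subst M₂ x N)

/-- Simultaneous substitution along a partial assignment of terms to variables. -/
def msubst : Lam → (ℕ → Option Lam) → Lam
  | var y, σ => (σ y).getD (var y)
  | lam y M, σ => lam y (msubst M (fun z => if z = y then none else σ z))
  | app M₁ M₂, σ => app (msubst M₁ σ) (msubst M₂ σ)

/-- The assignment sending each `xᵢ` to `tᵢ` (first match wins). -/
def substOf (xs : List ℕ) (ts : List Lam) : ℕ → Option Lam :=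
  fun y => (xs.zip ts).lookup y

/-- Values: variables and abstractions. -/
def IsValue : Lam → Prop
  | var _ => True
  | lam _ _ => True
  | app _ _ => False

/-- Weak call-by-value reduction. -/
inductive CbvStep : Lam → Lam → Prop
  | beta {x : ℕ} {M V : Lam} : IsValue V → CbvStep (app (lam x M) V) (subst M x V)
  | appL {M N L : Lam} : CbvStep M N → CbvStep (app M L) (app N L)
  | appR {M N L : Lam} : CbvStep M N → CbvStep (app L M) (app L N)

/-- A →v-normal form. -/
def CbvNormal (M : Lam) : Prop := ¬ ∃ N, CbvStep M N

/-- Free variables, as a finite set. -/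
def fv : Lam → Finset ℕ
  | var x => {x}
  | lam x M => fv M \ {x}
  | app M N => fv M ∪ fv N

/-- The sequence (without repetitions, in variable order) of free variables of `M`. -/
def fvList (M : Lam) : List ℕ := (fv M).sort (· ≤ ·)

def Closed (M : Lam) : Prop := fv M = ∅

/-- The size |M| of a λ-term. -/
def size : Lam → ℕ
  | var _ => 1
  | lam _ M => size M + 1
  | app M N => size M + size N + 1

end Lam

/-- `NSteps r n a b`: `a` reduces to `b` in exactly `n` `r`-steps. -/
def NSteps {α : Type*} (r : α → α → Prop) : ℕ → α → α → Prop
  | 0 => fun a b => a = b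
  | n + 1 => fun a c => ∃ b, r a b ∧ NSteps r n b c

/-- Terms of the constructor rewrite system Φ: variables, the binary function symbol
`app`, and for every λ-term `M` and variable `x` a constructor `c_{x,M}` (here `con x M`),
whose arity is the length of `FV(λx.M)`. -/
inductive PTerm : Type
  | var : ℕ → PTerm
  | app : PTerm → PTerm → PTerm
  | con : ℕ → Lam → List PTerm → PTerm

namespace PTerm

/-- Well-formed Φ-terms: every constructor is applied to as many arguments as its arity. -/
inductive WF : PTerm → Prop
  | var {x} : WF (var x)
  | app {u v} : WF u → WF v → WF (app u v)
  | con {x M ts} : ts.length = (Lam.fvList (Lam.lam x M)).length →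
      (∀ t ∈ ts, WF t) → WF (con x M ts)

/-- Constructor terms: built only from constructors. -/
inductive IsConTerm : PTerm → Prop
  | con {x M ts} : (∀ t ∈ ts, IsConTerm t) → IsConTerm (con x M ts)

/-- Canonical closed Φ-terms. -/
inductive Canonical : PTerm → Prop
  | con {t} : IsConTerm t → Canonical t
  | app {u v} : Canonical u → Canonical v → Canonical (app u v)

/-- Closed Φ-terms contain no variables. -/
inductive ClosedP : PTerm → Prop
  | app {u v} : ClosedP u → ClosedP v → ClosedP (app u v)
  | con {x M ts} : (∀ t ∈ ts, ClosedP t) → ClosedP (con x M ts)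

/-- Substitution of Φ-terms for variables. -/
def psubst (σ : ℕ → Option PTerm) : PTerm → PTerm
  | var y => (σ y).getD (var y)
  | app u v => app (psubst σ u) (psubst σ v)
  | con x M ts => con x M (ts.attach.map (fun t => psubst σ t.1))
decreasing_by
  all_goals simp_wf
  all_goals try have := List.sizeOf_lt_of_mem t.2
  all_goals omega

/-- The assignment sending each `xᵢ` to `tᵢ`. -/
def substOfP (xs : List ℕ) (ts : List PTerm) : ℕ → Option PTerm :=
  fun y => (xs.zip ts).lookup y

/-- Variables occurring in a Φ-term. -/
def pvars : PTerm → List ℕ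
  | var y => [y]
  | app u v => pvars u ++ pvars v
  | con _ _ ts => ts.attach.flatMap (fun t => pvars t.1)
decreasing_by
  all_goals simp_wf
  all_goals try have := List.sizeOf_lt_of_mem t.2
  all_goals omega

end PTerm

/-- The translation ⟨·⟩ from λ-terms to Φ-terms. -/
def transPhi : Lam → PTerm
  | .var x => .var x
  | .lam x M => .con x M ((Lam.fvList (.lam x M)).map .var)
  | .app M N => .app (transPhi M) (transPhi N)

/-- The readback ⟦·⟧ from Φ-terms to λ-terms. -/
def readback : PTerm → Lam
  | .var x => .var x
  | .app u v => .app (readback u) (readback v)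
  | .con x M ts =>
      Lam.msubst (.lam x M)
        (Lam.substOf (Lam.fvList (.lam x M)) (ts.attach.map (fun t => readback t.1)))
decreasing_by
  all_goals simp_wf
  all_goals try have := List.sizeOf_lt_of_mem t.2
  all_goals omega

/-- One-step rewriting in Φ: the rule app(c_{x,M}(x₁,…,xₙ), x) → ⟨M⟩ (matched variables
instantiated by constructor terms), closed under arbitrary contexts. -/
inductive PhiStep : PTerm → PTerm → Prop
  | root {x : ℕ} {M : Lam} {ts : List PTerm} {v : PTerm} :
      (∀ t ∈ ts, PTerm.IsConTerm t) → PTerm.IsConTerm v →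
      ts.length = (Lam.fvList (.lam x M)).length →
      PhiStep (.app (.con x M ts) v)
        (PTerm.psubst (PTerm.substOfP (Lam.fvList (.lam x M) ++ [x]) (ts ++ [v])) (transPhi M))
  | appL {u u' v} : PhiStep u u' → PhiStep (.app u v) (.app u' v)
  | appR {u v v'} : PhiStep v v' → PhiStep (.app u v) (.app u v')
  | conArg {x M ts₁ t t' ts₂} : PhiStep t t' →
      PhiStep (.con x M (ts₁ ++ t :: ts₂)) (.con x M (ts₁ ++ t' :: ts₂))

/-- Φ-normal forms. -/
def PhiNormal (t : PTerm) : Prop := ¬ ∃ u, PhiStep t u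

/-!
On the Φ-terms reachable from `⟨M⟩` with `M` closed, readback is a step-for-step bisimulation
between Φ-rewriting and weak call-by-value reduction. Such terms are *canonical* (built by `app`
from constructor terms), and a well-formed constructor term reads back to a closed abstraction,
hence to a value. A root step `app(c_{x,M}(ts), v) → ⟨M⟩{ts/xs, v/x}` reads back to the
βv-step `(λx. M{⟦ts⟧/xs}) ⟦v⟧ →v M{⟦ts⟧/xs}{⟦v⟧/x}`; everything substituted is closed, so the
capture-permitting substitution composes correctly. A step inside a constructor is impossible,
because the arguments of canonical constructors are constructor terms, and conversely every
redex of `⟦t⟧` is the readback of a Φ-redex of `t`. As `⟦⟨M⟩⟧ = M`, reduction sequences of each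
length and normal forms correspond.
-/

namespace List

variable {α β γ : Type*} [BEq α] {xs : List α} {us : List β} {y : α}

theorem lookup_zip_map_right (f : β → γ) :
    (xs.zip (us.map f)).lookup y = ((xs.zip us).lookup y).map f := by
  induction xs generalizing us with
  | nil => simp
  | cons x xs ih =>
    cases us with
    | nil => simp
    | cons u us => cases h : y == x <;> simp [lookup_cons, h, ih]

variable [LawfulBEq α]

theorem lookup_zip_eq_none (h : y ∉ xs) : (xs.zip us).lookup y = none := by
  simp only [lookup_eq_none_iff, bne_iff_ne, ne_eq]
  rintro ⟨x, u⟩ hxu rfl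
  exact h (of_mem_zip hxu).1

theorem mem_of_lookup_zip_eq_some {u : β} (h : (xs.zip us).lookup y = some u) : u ∈ us := by
  obtain ⟨l₁, l₂, hl, -⟩ := lookup_eq_some_iff.mp h
  exact (of_mem_zip (hl ▸ mem_append_right l₁ mem_cons_self)).2

theorem exists_lookup_zip_eq_some (hl : xs.length = us.length) (h : y ∈ xs) :
    ∃ u ∈ us, (xs.zip us).lookup y = some u := by
  rw [← map_fst_zip hl.le, mem_map] at h
  obtain ⟨p, hp, rfl⟩ := h
  obtain ⟨u, hu⟩ := Option.isSome_iff_exists.mp <| lookup_isSome_iff.mpr ⟨p, hp, BEq.rfl⟩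
  exact ⟨u, mem_of_lookup_zip_eq_some hu, hu⟩

theorem lookup_zip_append_singleton [DecidableEq α] {x : α} {u : β} (hx : x ∉ xs)
    (hl : xs.length = us.length) :
    ((xs ++ [x]).zip (us ++ [u])).lookup y = if y = x then some u else (xs.zip us).lookup y := by
  rw [zip_append hl, lookup_append]
  split_ifs with h
  · subst h; simp [lookup_zip_eq_none hx]
  · simp [lookup_cons, beq_false_of_ne h]

theorem lookup_zip_map_self (g : α → β) (h : y ∈ xs) :
    (xs.zip (xs.map g)).lookup y = some (g y) := by
  have hzip : xs.zip (xs.map g) = xs.map fun a => (a, g a) := by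
    simpa using zip_map' (f := id) (g := g) (l := xs)
  rw [hzip, lookup_graph g h]

end List

structure IsFunctionalBisim {α β : Type*} (r : α → α → Prop) (s : β → β → Prop) (f : α → β)
    (P : α → Prop) : Prop where
  invariant {a a' : α} : P a → r a a' → P a'
  map_step {a a' : α} : P a → r a a' → s (f a) (f a')
  lift_step {a : α} {b : β} : P a → s (f a) b → ∃ a', r a a' ∧ f a' = b

namespace IsFunctionalBisim

variable {α β : Type*} {r : α → α → Prop} {s : β → β → Prop} {f : α → β} {P : α → Prop}

theorem nsteps_map (h : IsFunctionalBisim r s f P) :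
    ∀ {n : ℕ} {a a' : α}, P a → NSteps r n a a' → P a' ∧ NSteps s n (f a) (f a')
  | 0, _, _, ha, rfl => ⟨ha, rfl⟩
  | _ + 1, _, _, ha, ⟨_, hr, hn⟩ =>
    have ⟨ha', hn'⟩ := h.nsteps_map (h.invariant ha hr) hn
    ⟨ha', _, h.map_step ha hr, hn'⟩

theorem nsteps_lift (h : IsFunctionalBisim r s f P) :
    ∀ {n : ℕ} {a : α} {b : β}, P a → NSteps s n (f a) b → ∃ a', NSteps r n a a' ∧ P a' ∧ f a' = b
  | 0, a, _, ha, rfl => ⟨a, rfl, ha, rfl⟩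
  | _ + 1, _, _, ha, ⟨_, hs, hn⟩ => by
    obtain ⟨a₁, hr, rfl⟩ := h.lift_step ha hs
    obtain ⟨a', hn', ha', rfl⟩ := h.nsteps_lift (h.invariant ha hr) hn
    exact ⟨a', ⟨a₁, hr, hn'⟩, ha', rfl⟩

theorem not_exists_step_iff (h : IsFunctionalBisim r s f P) {a : α} (ha : P a) :
    (¬∃ a', r a a') ↔ ¬∃ b, s (f a) b := by
  refine not_congr ⟨fun ⟨a', hr⟩ => ⟨f a', h.map_step ha hr⟩, fun ⟨b, hs⟩ => ?_⟩
  obtain ⟨a', hr, -⟩ := h.lift_step ha hs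
  exact ⟨a', hr⟩

end IsFunctionalBisim

namespace Lam

theorem mem_fvList_lam {x z : ℕ} {M : Lam} : z ∈ fvList (lam x M) ↔ z ∈ fv M ∧ z ≠ x := by
  simp [fvList, fv]

theorem notMem_fvList_lam (x : ℕ) (M : Lam) : x ∉ fvList (lam x M) := by
  simp [mem_fvList_lam]

theorem msubst_congr : ∀ (M : Lam) {σ₁ σ₂ : ℕ → Option Lam},
    (∀ y ∈ fv M, (σ₁ y).getD (var y) = (σ₂ y).getD (var y)) → msubst M σ₁ = msubst M σ₂
  | var y, _, _, h => h y (by simp [fv])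
  | lam y M, _, _, h => by
    rw [msubst, msubst, msubst_congr M fun z hz => ?_]
    by_cases hzy : z = y
    · simp [hzy]
    · simpa [hzy] using h z (by simp [fv, hz, hzy])
  | app M₁ M₂, _, _, h => by
    rw [msubst, msubst, msubst_congr M₁ fun z hz => h z (by simp [fv, hz]),
      msubst_congr M₂ fun z hz => h z (by simp [fv, hz])]

theorem msubst_none : ∀ M : Lam, msubst M (fun _ => none) = M
  | var _ => rfl
  | lam y M => by simp [msubst, msubst_none M]
  | app M₁ M₂ => by simp [msubst, msubst_none M₁, msubst_none M₂]

theorem msubst_eq_self {M : Lam} {σ : ℕ → Option Lam}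
    (h : ∀ y ∈ fv M, (σ y).getD (var y) = var y) : msubst M σ = M :=
  (msubst_congr M (by simpa using h)).trans (msubst_none M)

theorem subst_eq_self {x : ℕ} {V : Lam} : ∀ {M : Lam}, x ∉ fv M → subst M x V = M
  | var y, h => by simp_all [subst, fv, eq_comm]
  | lam y M, h => by
    by_cases hyx : y = x
    · simp [subst, hyx]
    · simp_all [subst, fv, subst_eq_self (M := M), eq_comm]
  | app M₁ M₂, h => by simp_all [subst, fv, subst_eq_self (M := M₁), subst_eq_self (M := M₂)]

theorem fv_msubst_subset : ∀ (M : Lam) {σ : ℕ → Option Lam}, (∀ y t, σ y = some t → fv t = ∅) →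
    fv (msubst M σ) ⊆ (fv M).filter (σ · = none)
  | var y, σ, h => by
    cases hy : σ y with
    | none => simp [msubst, fv, hy]
    | some t => simp [msubst, hy, h y t hy]
  | lam y M, σ, h => by
    intro z hz
    simp only [msubst, fv, Finset.mem_sdiff, Finset.mem_singleton] at hz
    have := fv_msubst_subset M (σ := fun w => if w = y then none else σ w)
      (fun w t hw => by split_ifs at hw; exact h w t hw) hz.1
    simp_all [fv]
  | app M₁ M₂, σ, h => by
    simp only [msubst, fv, Finset.filter_union]
    exact Finset.union_subset_union (fv_msubst_subset M₁ h) (fv_msubst_subset M₂ h)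

theorem subst_msubst {x : ℕ} {V : Lam} : ∀ (M : Lam) {σ : ℕ → Option Lam},
    σ x = none → (∀ y t, σ y = some t → fv t = ∅) →
    subst (msubst M σ) x V = msubst M (fun z => if z = x then some V else σ z)
  | var y, σ, hx, h => by
    by_cases hyx : y = x
    · simp [msubst, subst, hyx, hx]
    · cases hy : σ y with
      | none => simp [msubst, subst, hy, hyx]
      | some t => simp [msubst, hy, hyx, subst_eq_self, h y t hy]
  | lam y M, σ, hx, h => by
    by_cases hyx : y = x
    · subst hyx
      simp only [msubst, subst, if_true]
      congr 1
      exact msubst_congr M fun z _ => by by_cases hzy : z = y <;> simp [hzy]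
    · simp only [msubst, subst, hyx, if_false]
      rw [subst_msubst M (by simp [Ne.symm hyx, hx])
        (fun w t hw => by split_ifs at hw; exact h w t hw)]
      congr 1
      exact msubst_congr M fun z _ => by
        by_cases hzy : z = y <;> by_cases hzx : z = x <;> simp_all
  | app M₁ M₂, σ, hx, h => by simp [msubst, subst, subst_msubst M₁ hx h, subst_msubst M₂ hx h]

theorem IsValue.cbvNormal {V : Lam} (hV : IsValue V) : CbvNormal V := by
  rintro ⟨N, h⟩
  cases h <;> exact hV

theorem cbvStep_app_iff {A B N : Lam} :
    CbvStep (app A B) N ↔ (∃ x M, A = lam x M ∧ IsValue B ∧ N = subst M x B) ∨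
      (∃ A', CbvStep A A' ∧ N = app A' B) ∨ (∃ B', CbvStep B B' ∧ N = app A B') := by
  constructor
  · rintro (⟨hV⟩ | ⟨h⟩ | ⟨h⟩)
    exacts [Or.inl ⟨_, _, rfl, hV, rfl⟩, Or.inr (Or.inl ⟨_, h, rfl⟩), Or.inr (Or.inr ⟨_, h, rfl⟩)]
  · rintro (⟨x, M, rfl, hV, rfl⟩ | ⟨A', h, rfl⟩ | ⟨B', h, rfl⟩)
    exacts [.beta hV, .appL h, .appR h]

end Lam

namespace PTerm

open Lam

@[simp] theorem psubst_var (σ : ℕ → Option PTerm) (y : ℕ) :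
    psubst σ (var y) = (σ y).getD (var y) := by
  rw [psubst]

@[simp] theorem psubst_app (σ : ℕ → Option PTerm) (u v : PTerm) :
    psubst σ (app u v) = app (psubst σ u) (psubst σ v) := by
  rw [psubst]

@[simp] theorem psubst_con (σ : ℕ → Option PTerm) (x : ℕ) (M : Lam) (ts : List PTerm) :
    psubst σ (con x M ts) = con x M (ts.map (psubst σ)) := by
  rw [psubst, List.attach_map_val]

theorem IsConTerm.not_phiStep {t u : PTerm} (ht : IsConTerm t) : ¬ PhiStep t u := by
  intro h
  induction h with
  | root | appL | appR => cases ht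
  | conArg _ ih => cases ht with | con hts => exact ih (hts _ (by simp))

theorem Canonical.of_app {u v : PTerm} (h : Canonical (.app u v)) : Canonical u ∧ Canonical v := by
  cases h with
  | con h => cases h
  | app hu hv => exact ⟨hu, hv⟩

theorem WF.of_app {u v : PTerm} (h : WF (.app u v)) : WF u ∧ WF v := by
  cases h with
  | app hu hv => exact ⟨hu, hv⟩

theorem WF.of_con {x : ℕ} {M : Lam} {ts : List PTerm} (h : WF (.con x M ts)) :
    ts.length = (fvList (.lam x M)).length ∧ ∀ t ∈ ts, WF t := by
  cases h with
  | con hlen hts => exact ⟨hlen, hts⟩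

theorem WF.psubst {σ : ℕ → Option PTerm} (hσ : ∀ y s, σ y = some s → WF s) {t : PTerm}
    (ht : WF t) : WF (psubst σ t) := by
  induction ht with
  | @var y => cases hy : σ y <;> simp [hy, hσ y, WF.var]
  | app _ _ ihu ihv => simpa using WF.app ihu ihv
  | con hlen _ ih => simpa using WF.con (by simpa using hlen) (by simpa using ih)

theorem wf_transPhi : ∀ M : Lam, WF (transPhi M)
  | .var _ => .var
  | .lam _ _ => .con (by simp) (by simp [WF.var])
  | .app M N => .app (wf_transPhi M) (wf_transPhi N)

theorem canonical_psubst_transPhi {σ : ℕ → Option PTerm} : ∀ {P : Lam},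
    (∀ y ∈ fv P, ∃ t, σ y = some t ∧ IsConTerm t) → Canonical (psubst σ (transPhi P))
  | .var y, h => by
    obtain ⟨t, ht, hc⟩ := h y (by simp [fv])
    simpa [transPhi, ht] using Canonical.con hc
  | .app P₁ P₂, h => by
    simpa [transPhi] using
      Canonical.app (canonical_psubst_transPhi fun y hy => h y (by simp [fv, hy]))
        (canonical_psubst_transPhi fun y hy => h y (by simp [fv, hy]))
  | .lam y P, h => by
    simp only [transPhi, psubst_con, List.map_map]
    refine Canonical.con (IsConTerm.con fun t ht => ?_)
    obtain ⟨z, hz, rfl⟩ := List.mem_map.mp ht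
    obtain ⟨t, ht, hc⟩ := h z (by simpa [fvList] using hz)
    simpa [ht] using hc

theorem canonical_transPhi : ∀ {M : Lam}, Closed M → Canonical (transPhi M)
  | .var _, h => by simp [Closed, fv] at h
  | .lam x M, h => by
    rw [transPhi, fvList, h]
    exact .con (.con (by simp))
  | .app M N, h => by
    rw [Closed, fv, Finset.union_eq_empty] at h
    exact .app (canonical_transPhi h.1) (canonical_transPhi h.2)

end PTerm

section Readback

open Lam PTerm

@[simp] theorem readback_var (y : ℕ) : readback (.var y) = .var y := by
  rw [readback]

@[simp] theorem readback_app (u v : PTerm) :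
    readback (.app u v) = .app (readback u) (readback v) := by
  rw [readback]

def readbackEnv (x : ℕ) (M : Lam) (ts : List PTerm) : ℕ → Option Lam :=
  fun z => if z = x then none else substOf (fvList (.lam x M)) (ts.map readback) z

@[simp] theorem readback_con (x : ℕ) (M : Lam) (ts : List PTerm) :
    readback (.con x M ts) = .lam x (msubst M (readbackEnv x M ts)) := by
  rw [readback, List.attach_map_val]
  rfl

theorem readbackEnv_closed {x : ℕ} {M : Lam} {ts : List PTerm}
    (hts : ∀ t ∈ ts, Closed (readback t)) {y : ℕ} {N : Lam} (h : readbackEnv x M ts y = some N) :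
    fv N = ∅ := by
  simp only [readbackEnv] at h
  split_ifs at h
  obtain ⟨t, ht, rfl⟩ := List.mem_map.mp (List.mem_of_lookup_zip_eq_some h)
  exact hts t ht

theorem PTerm.IsConTerm.isValue_readback {t : PTerm} (ht : IsConTerm t) : IsValue (readback t) := by
  cases ht
  simp [IsValue]

theorem PTerm.Canonical.isConTerm_of_isValue {t : PTerm} (hc : Canonical t)
    (hv : IsValue (readback t)) : IsConTerm t := by
  cases hc with
  | con h => exact h
  | app => simp [IsValue] at hv

theorem readback_transPhi : ∀ M : Lam, readback (transPhi M) = M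
  | .var _ => readback_var _
  | .app M N => by simp [transPhi, readback_transPhi M, readback_transPhi N]
  | .lam x M => by
    simp only [transPhi, readback_con, lam.injEq, true_and]
    refine msubst_eq_self fun y hy => ?_
    by_cases hyx : y = x
    · simp [readbackEnv, hyx]
    · simp [readbackEnv, hyx, substOf, List.lookup_zip_map_self _ (mem_fvList_lam.mpr ⟨hy, hyx⟩)]

theorem readback_psubst_transPhi (σ : ℕ → Option PTerm) : ∀ P : Lam,
    readback (psubst σ (transPhi P)) = msubst P fun y => (σ y).map readback
  | .var y => by cases h : σ y <;> simp [transPhi, msubst, h]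
  | .app P₁ P₂ => by
    simp [transPhi, msubst, readback_psubst_transPhi σ P₁, readback_psubst_transPhi σ P₂]
  | .lam y P => by
    simp only [transPhi, psubst_con, readback_con, msubst, lam.injEq, true_and]
    refine msubst_congr P fun z hz => ?_
    by_cases hzy : z = y
    · simp [readbackEnv, hzy]
    · rw [readbackEnv, if_neg hzy, if_neg hzy, substOf, List.map_map, List.map_map,
        List.lookup_zip_map_self _ (mem_fvList_lam.mpr ⟨hz, hzy⟩)]
      cases h : σ z <;> simp [h]

theorem PTerm.IsConTerm.closed_readback {t : PTerm} (ht : IsConTerm t) (hw : WF t) :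
    Closed (readback t) := by
  induction ht with
  | @con x M ts _ ih =>
    obtain ⟨hlen, hw⟩ := hw.of_con
    rw [Closed, Finset.eq_empty_iff_forall_notMem]
    intro z hz
    simp only [readback_con, fv, Finset.mem_sdiff, Finset.mem_singleton] at hz
    have hz' := Finset.mem_filter.mp
      (fv_msubst_subset M (fun _ _ => readbackEnv_closed fun t ht => ih t ht (hw t ht)) hz.1)
    obtain ⟨N, -, hN⟩ := List.exists_lookup_zip_eq_some (us := ts.map readback)
      (by simp [hlen]) (mem_fvList_lam.mpr ⟨hz'.1, hz.2⟩)
    simp [readbackEnv, hz.2, substOf, hN] at hz'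

theorem readback_psubst_root {x : ℕ} {M : Lam} {ts : List PTerm} (v : PTerm)
    (hts : ∀ t ∈ ts, IsConTerm t) (hw : WF (.con x M ts)) :
    readback (psubst (substOfP (fvList (.lam x M) ++ [x]) (ts ++ [v])) (transPhi M)) =
      subst (msubst M (readbackEnv x M ts)) x (readback v) := by
  obtain ⟨hlen, hw⟩ := hw.of_con
  have hcl : ∀ t ∈ ts, Closed (readback t) := fun t ht => (hts t ht).closed_readback (hw t ht)
  rw [readback_psubst_transPhi, subst_msubst M (by simp [readbackEnv])
    (fun _ _ => readbackEnv_closed hcl)]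
  congr 1
  funext z
  rw [substOfP, List.lookup_zip_append_singleton (notMem_fvList_lam x M) hlen.symm]
  split_ifs with hzx
  · rfl
  · simp [readbackEnv, hzx, substOf, List.lookup_zip_map_right]

end Readback

namespace PhiStep

open Lam PTerm

theorem wf {t u : PTerm} (h : PhiStep t u) (hw : WF t) : WF u := by
  induction h with
  | @root _ M =>
    obtain ⟨hc, hv⟩ := hw.of_app
    refine WF.psubst (fun y s hy => ?_) (wf_transPhi M)
    rcases List.mem_append.mp (List.mem_of_lookup_zip_eq_some hy) with hs | hs
    · exact hc.of_con.2 s hs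
    · rwa [List.mem_singleton.mp hs]
  | appL _ ih => exact .app (ih hw.of_app.1) hw.of_app.2
  | appR _ ih => exact .app hw.of_app.1 (ih hw.of_app.2)
  | conArg _ ih =>
    cases hw with
    | con hlen hts =>
      refine .con (by simpa using hlen) fun s hs => ?_
      simp only [List.mem_append, List.mem_cons] at hts hs
      rcases hs with hs | rfl | hs
      exacts [hts s (.inl hs), ih (hts _ (.inr (.inl rfl))), hts s (.inr (.inr hs))]

theorem canonical {t u : PTerm} (h : PhiStep t u) (hc : Canonical t) : Canonical u := by
  induction h with
  | @root x M ts v hts hv hlen =>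
    refine canonical_psubst_transPhi fun y hy => ?_
    rw [substOfP, List.lookup_zip_append_singleton (notMem_fvList_lam x M) hlen.symm]
    split_ifs with hyx
    · exact ⟨v, rfl, hv⟩
    · obtain ⟨t, ht, hy⟩ := List.exists_lookup_zip_eq_some hlen.symm (mem_fvList_lam.mpr ⟨hy, hyx⟩)
      exact ⟨t, hy, hts t ht⟩
  | appL _ ih => exact .app (ih hc.of_app.1) hc.of_app.2
  | appR _ ih => exact .app hc.of_app.1 (ih hc.of_app.2)
  | conArg h => cases hc with | con hc => exact absurd (.conArg h) hc.not_phiStep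

theorem cbvStep_readback {t u : PTerm} (h : PhiStep t u) (hc : Canonical t) (hw : WF t) :
    CbvStep (readback t) (readback u) := by
  induction h with
  | root hts hv =>
    rw [readback_app, readback_con, readback_psubst_root _ hts hw.of_app.1]
    exact .beta hv.isValue_readback
  | appL _ ih => simpa using CbvStep.appL (ih hc.of_app.1 hw.of_app.1)
  | appR _ ih => simpa using CbvStep.appR (ih hc.of_app.2 hw.of_app.2)
  | conArg h => cases hc with | con hc => exact absurd (.conArg h) hc.not_phiStep

end PhiStep

open Lam PTerm in
theorem exists_phiStep_of_cbvStep {t : PTerm} (hc : Canonical t) (hw : WF t) {N : Lam}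
    (h : CbvStep (readback t) N) : ∃ u, PhiStep t u ∧ readback u = N := by
  induction hc generalizing N with
  | con ht => exact absurd ⟨N, h⟩ ht.isValue_readback.cbvNormal
  | @app t₁ t₂ hc₁ hc₂ ih₁ ih₂ =>
    obtain ⟨hw₁, hw₂⟩ := hw.of_app
    rcases cbvStep_app_iff.mp (readback_app t₁ t₂ ▸ h) with
      ⟨x, M, hlam, hV, rfl⟩ | ⟨N₁, h₁, rfl⟩ | ⟨N₂, h₂, rfl⟩
    · obtain @⟨x', M', ts, hts⟩ := hc₁.isConTerm_of_isValue (by simp [hlam, IsValue])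
      obtain ⟨rfl, rfl⟩ := lam.inj (readback_con x' M' ts ▸ hlam)
      exact ⟨_, .root hts (hc₂.isConTerm_of_isValue hV) hw₁.of_con.1,
        readback_psubst_root t₂ hts hw₁⟩
    · obtain ⟨u₁, hu₁, rfl⟩ := ih₁ hw₁ h₁
      exact ⟨_, .appL hu₁, readback_app _ _⟩
    · obtain ⟨u₂, hu₂, rfl⟩ := ih₂ hw₂ h₂
      exact ⟨_, .appR hu₂, readback_app _ _⟩

open Lam PTerm in
theorem isFunctionalBisim_readback :
    IsFunctionalBisim PhiStep CbvStep readback fun t => Canonical t ∧ WF t where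
  invariant := fun ⟨hc, hw⟩ h => ⟨h.canonical hc, h.wf hw⟩
  map_step := fun ⟨hc, hw⟩ h => h.cbvStep_readback hc hw
  lift_step := fun ⟨hc, hw⟩ h => exists_phiStep_of_cbvStep hc hw h

/-- Term Reducibility (call-by-value): for every closed λ-term M, M →v^n N with N
normal iff ⟨M⟩ rewrites in exactly n Φ-steps to a Φ-normal form t with ⟦t⟧ = N. -/
theorem term_reducibility (M N : Lam) (n : ℕ) (hM : Lam.Closed M) :
    (NSteps Lam.CbvStep n M N ∧ Lam.CbvNormal N) ↔
    (∃ t : PTerm, NSteps PhiStep n (transPhi M) t ∧ PhiNormal t ∧ readback t = N) := by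
  have hP : PTerm.Canonical (transPhi M) ∧ PTerm.WF (transPhi M) :=
    ⟨PTerm.canonical_transPhi hM, PTerm.wf_transPhi M⟩
  constructor
  · rintro ⟨hsteps, hN⟩
    obtain ⟨t, ht, htP, rfl⟩ :=
      isFunctionalBisim_readback.nsteps_lift hP ((readback_transPhi M).symm ▸ hsteps)
    exact ⟨t, ht, (isFunctionalBisim_readback.not_exists_step_iff htP).mpr hN, rfl⟩
  · rintro ⟨t, ht, ht_normal, rfl⟩
    obtain ⟨htP, hsteps⟩ := isFunctionalBisim_readback.nsteps_map hP ht
    exact ⟨readback_transPhi M ▸ hsteps,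
      (isFunctionalBisim_readback.not_exists_step_iff htP).mp ht_normal⟩
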